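/- Let X be a nonnegative random variable with mean μ ≥ μ_c, where μ_c is the largest root of 2λ = e^{λ−1/2}. Let f(s) = E[e^{-X(1−s)}], z_D the smallest root in [0,1] of s = E[X e^{-X(1−s)}]/μ, and q_D = f(z_D). Then q_D ≥ q(μ), where q(μ) = e^{-μ(1−z(μ))} and z(μ) is the smallest root in [0,1] of z = e^{-μ(1−z)}. -/

import Mathlib

/-!
Write `z = z_D`. If `z(μ) ≤ z`, Jensen's inequality for `exp` already gives
`f z ≥ exp (-μ (1 - z)) ≥ exp (-μ (1 - z(μ))) = z(μ)`.

Otherwise put `Y = (1 - z) X` and `L = -log z`; the fixed-point equation says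
`E[Y e^{-Y}] = e^{-L} E[Y]`. Now `1 - e^{-y} = y ψ(e^{-y})` with `ψ(s) = (1 - s) / (-log s)`
the logarithmic mean of `1` and `s`, which is concave because `ψ(s) = ∫₀¹ s^t dt`.
Jensen for `ψ` under the size-biased law `Y dP / E[Y]` gives
`f z = 1 - E[Y ψ(e^{-Y})] ≥ 1 - ψ(z) E[Y] = 1 - μ (1 - z)² / L`, and
`μ (1 - z)² ≤ (1 - z(μ)) L` follows from `-log (1 - t) ≥ t + t² / 2` once `μ z(μ) ≤ 1/2`.
That last bound is where `μ ≥ μ_c` enters: `s = 1 / (2μ)` solves `s = e^{-μ(1-s)}` exactly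
when `2μ = e^{μ - 1/2}`.
-/

open MeasureTheory ProbabilityTheory Real

lemma exists_one_le_two_mul_eq_exp_sub_half : ∃ x : ℝ, 1 ≤ x ∧ 2 * x = exp (x - 1 / 2) := by
  have h1 : exp (1 - 1 / 2) - 2 * 1 ≤ (0 : ℝ) := by
    have := exp_bound_div_one_sub_of_interval' (x := 1 / 2) (by norm_num) (by norm_num)
    norm_num at this ⊢
    linarith
  have h4 : (0 : ℝ) ≤ exp (4 - 1 / 2) - 2 * 4 := by
    have := quadratic_le_exp_of_nonneg (x := 4 - 1 / 2) (by norm_num)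
    linarith
  obtain ⟨x, hx, hx0⟩ := intermediate_value_Icc (by norm_num : (1 : ℝ) ≤ 4)
    (by fun_prop : Continuous fun x : ℝ => exp (x - 1 / 2) - 2 * x).continuousOn ⟨h1, h4⟩
  exact ⟨x, hx.1, by linarith [hx0]⟩

lemma two_mul_le_exp_sub_half {c μ : ℝ} (hc : 2 * c = exp (c - 1 / 2)) (hc1 : 1 ≤ c)
    (hcμ : c ≤ μ) : 2 * μ ≤ exp (μ - 1 / 2) := by
  have hsplit : exp (μ - 1 / 2) = exp (c - 1 / 2) * exp (μ - c) := by rw [← exp_add]; ring_nf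
  rw [hsplit, ← hc]
  nlinarith [add_one_le_exp (μ - c)]

lemma two_mul_mul_le_one_of_two_mul_le_exp {μ z : ℝ} (hμ : 1 / 2 ≤ μ)
    (h : 2 * μ ≤ exp (μ - 1 / 2))
    (hzmin : ∀ s ∈ Set.Icc (0 : ℝ) 1, s = exp (-μ * (1 - s)) → z ≤ s) : 2 * μ * z ≤ 1 := by
  have hμ0 : 0 < 2 * μ := by linarith
  have hend : exp (-μ * (1 - 1 / (2 * μ))) - 1 / (2 * μ) ≤ 0 := by
    have he : -μ * (1 - 1 / (2 * μ)) = -(μ - 1 / 2) := by field_simp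
    rw [he, exp_neg, sub_nonpos, one_div (2 * μ)]
    exact inv_anti₀ hμ0 h
  obtain ⟨s, hs, hs0⟩ := intermediate_value_Icc' (by positivity : (0 : ℝ) ≤ 1 / (2 * μ))
    (by fun_prop : Continuous fun s : ℝ => exp (-μ * (1 - s)) - s).continuousOn
    ⟨hend, by simp only [sub_zero]; positivity⟩
  have hs1 : s ≤ 1 := hs.2.trans ((div_le_one hμ0).2 (by linarith))
  have hzs := hzmin s ⟨hs.1, hs1⟩ (by linarith [hs0])
  rw [← le_div_iff₀' hμ0]
  exact hzs.trans hs.2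

lemma one_sub_exp_neg_eq_mul_integral (y : ℝ) :
    1 - exp (-y) = y * ∫ t in (0 : ℝ)..1, exp (-(y * t)) := by
  rw [← intervalIntegral.integral_const_mul,
    intervalIntegral.integral_eq_sub_of_hasDerivAt (f := fun t => -exp (-(y * t)))]
  · simp only [mul_one, mul_zero, neg_zero, exp_zero]
    ring
  · intro t _
    exact (((hasDerivAt_id t).const_mul y).neg.exp.neg).congr_deriv (by simp [mul_comm])
  · exact (by fun_prop : Continuous fun t => y * exp (-(y * t))).intervalIntegrable _ _

lemma exp_neg_mul_le_of_mem_Icc (y L : ℝ) {t : ℝ} (ht : t ∈ Set.Icc (0 : ℝ) 1) :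
    exp (-(y * t)) ≤ (1 - t) * exp (-(L * t)) + exp L * (t * exp (-(L * t))) * exp (-y) := by
  have hconv := convexOn_exp.2 (Set.mem_univ 0) (Set.mem_univ (L - y)) (sub_nonneg.2 ht.2) ht.1
    (sub_add_cancel 1 t)
  simp only [smul_eq_mul, mul_zero, zero_add, exp_zero, mul_one] at hconv
  calc exp (-(y * t)) = exp (-(L * t)) * exp (t * (L - y)) := by rw [← exp_add]; ring_nf
    _ ≤ exp (-(L * t)) * (1 - t + t * exp (L - y)) := by gcongr
    _ = _ := by rw [sub_eq_add_neg L, exp_add]; ring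

/-- `a + b s` is the tangent line at `s = e^{-L}` of the concave function
`ψ(s) = (1 - s) / (-log s) = ∫₀¹ s^t dt`, obtained by integrating the tangent lines of `s ↦ s^t`. -/
lemma exists_one_sub_exp_neg_le_mul_affine {L : ℝ} (hL : L ≠ 0) :
    ∃ a b : ℝ, a + b * exp (-L) = (1 - exp (-L)) / L ∧
      ∀ y, 0 ≤ y → 1 - exp (-y) ≤ y * (a + b * exp (-y)) := by
  have hA : IntervalIntegrable (fun t => (1 - t) * exp (-(L * t))) volume 0 1 :=
    (by fun_prop : Continuous _).intervalIntegrable _ _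
  have hB : IntervalIntegrable (fun t => t * exp (-(L * t))) volume 0 1 :=
    (by fun_prop : Continuous _).intervalIntegrable _ _
  refine ⟨∫ t in (0 : ℝ)..1, (1 - t) * exp (-(L * t)),
    exp L * ∫ t in (0 : ℝ)..1, t * exp (-(L * t)), ?_, fun y hy => ?_⟩
  · rw [eq_div_iff hL, one_sub_exp_neg_eq_mul_integral L, mul_assoc, mul_left_comm, ← exp_add,
      add_neg_cancel, exp_zero, mul_one, ← intervalIntegral.integral_add hA hB, mul_comm]
    simp only [← add_mul, sub_add_cancel, one_mul]
  · rw [one_sub_exp_neg_eq_mul_integral y]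
    gcongr
    refine (intervalIntegral.integral_mono_on zero_le_one ?_ ?_
      fun t => exp_neg_mul_le_of_mem_Icc y L).trans_eq ?_
    · exact (by fun_prop : Continuous fun t => exp (-(y * t))).intervalIntegrable _ _
    · exact hA.add ((hB.const_mul _).mul_const _)
    · rw [intervalIntegral.integral_add hA ((hB.const_mul _).mul_const _),
        intervalIntegral.integral_mul_const, intervalIntegral.integral_const_mul]

section Expectation

variable {Ω : Type*} [MeasurableSpace Ω] {P : Measure Ω} {X : Ω → ℝ} {c : ℝ}

lemma integrable_exp_neg_mul [IsFiniteMeasure P] (hX : 0 ≤ X) (hm : AEStronglyMeasurable X P)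
    (hc : 0 ≤ c) : Integrable (fun ω => exp (-X ω * c)) P := by
  refine (integrable_const 1).mono'
    (continuous_exp.comp_aestronglyMeasurable (hm.neg.mul_const c)) ?_
  filter_upwards with ω
  rw [norm_of_nonneg (exp_pos _).le, exp_le_one_iff, neg_mul, neg_nonpos]
  exact mul_nonneg (hX ω) hc

lemma MeasureTheory.Integrable.mul_exp_neg_mul (hXi : Integrable X P) (hX : 0 ≤ X) (hc : 0 ≤ c) :
    Integrable (fun ω => X ω * exp (-X ω * c)) P := by
  refine hXi.mono' (hXi.aestronglyMeasurable.mul (continuous_exp.comp_aestronglyMeasurable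
    (hXi.aestronglyMeasurable.neg.mul_const c))) ?_
  filter_upwards with ω
  rw [norm_of_nonneg (mul_nonneg (hX ω) (exp_pos _).le)]
  exact mul_le_of_le_one_right (hX ω)
    (exp_le_one_iff.2 (by nlinarith [mul_nonneg (hX ω) hc]))

lemma integral_mul_exp_neg_mul_pos (hX : 0 ≤ X) (hXi : Integrable X P) (hc : 0 ≤ c)
    (h : 0 < ∫ ω, X ω ∂P) : 0 < ∫ ω, X ω * exp (-X ω * c) ∂P := by
  rw [integral_pos_iff_support_of_nonneg hX hXi] at h
  rw [integral_pos_iff_support_of_nonneg (fun ω => mul_nonneg (hX ω) (exp_pos _).le)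
    (hXi.mul_exp_neg_mul hX hc)]
  simpa [Function.support, exp_ne_zero] using h

lemma exp_neg_integral_mul_le_integral_exp_neg_mul [IsProbabilityMeasure P] (hX : 0 ≤ X)
    (hXi : Integrable X P) (hc : 0 ≤ c) :
    exp (-(∫ ω, X ω ∂P) * c) ≤ ∫ ω, exp (-X ω * c) ∂P := by
  have h : exp (∫ ω, -X ω * c ∂P) ≤ ∫ ω, exp (-X ω * c) ∂P :=
    convexOn_exp.map_integral_le continuous_exp.continuousOn isClosed_univ (by simp)
      (hXi.neg.mul_const c) (integrable_exp_neg_mul hX hXi.aestronglyMeasurable hc)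
  rwa [integral_mul_const, integral_neg] at h

lemma one_sub_mul_integral_le_integral_exp_neg_mul [IsProbabilityMeasure P] (hX : 0 ≤ X)
    (hXi : Integrable X P) (hc : 0 ≤ c) {L : ℝ} (hL : L ≠ 0)
    (hfix : ∫ ω, X ω * exp (-X ω * c) ∂P = exp (-L) * ∫ ω, X ω ∂P) :
    1 - c * (1 - exp (-L)) / L * ∫ ω, X ω ∂P ≤ ∫ ω, exp (-X ω * c) ∂P := by
  obtain ⟨a, b, hab, hbound⟩ := exists_one_sub_exp_neg_le_mul_affine hL
  have hXe := hXi.mul_exp_neg_mul hX hc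
  have haffine : Integrable (fun ω => c * a * X ω + c * b * (X ω * exp (-X ω * c))) P :=
    (hXi.const_mul _).add (hXe.const_mul _)
  calc 1 - c * (1 - exp (-L)) / L * ∫ ω, X ω ∂P
      = ∫ ω, (1 - (c * a * X ω + c * b * (X ω * exp (-X ω * c)))) ∂P := by
        rw [integral_sub (integrable_const 1) haffine, integral_add (hXi.const_mul _)
          (hXe.const_mul _), integral_const_mul, integral_const_mul, hfix, mul_div_assoc, ← hab]
        simp only [integral_const, probReal_univ, smul_eq_mul, one_mul]
        ring
    _ ≤ ∫ ω, exp (-X ω * c) ∂P :=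
        integral_mono ((integrable_const 1).sub haffine)
          (integrable_exp_neg_mul hX hXi.aestronglyMeasurable hc)
          fun ω => by
            have h := hbound (X ω * c) (mul_nonneg (hX ω) hc)
            rw [← neg_mul] at h
            linarith

end Expectation

lemma add_sq_div_two_le_neg_log_one_sub {t : ℝ} (h0 : 0 ≤ t) (h1 : t < 1) :
    t + t ^ 2 / 2 ≤ -log (1 - t) := by
  have := sum_le_hasSum (Finset.range 2) (fun n _ => by positivity)
    (hasSum_pow_div_log_of_abs_lt_one (by rwa [abs_of_nonneg h0]))
  norm_num [Finset.sum_range_succ] at this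
  linarith

lemma mul_one_sub_sq_le_mul_neg_log {μ z w : ℝ} (hw : 0 < w) (hwz : w ≤ z)
    (hμz : 2 * μ * z ≤ 1) (hz : z ≤ 1 / 2) (hfix : z = exp (-μ * (1 - z))) :
    μ * (1 - w) ^ 2 ≤ (1 - z) * -log w := by
  have hz0 : 0 < z := hw.trans_le hwz
  set t := 1 - w / z with ht
  have ht0 : 0 ≤ t := sub_nonneg.2 ((div_le_one hz0).2 hwz)
  have ht1 : t < 1 := sub_lt_self 1 (div_pos hw hz0)
  have hwt : w = z * (1 - t) := by rw [ht]; field_simp; ring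
  have hlog : -log w = μ * (1 - z) + -log (1 - t) := by
    rw [hwt, log_mul hz0.ne' (by linarith), hfix, log_exp, ← hfix]
    ring
  have htaylor := add_sq_div_two_le_neg_log_one_sub ht0 ht1
  rw [hlog, hwt]
  nlinarith [mul_nonneg (mul_nonneg (by linarith : (0 : ℝ) ≤ 1 - 2 * μ * z) ht0)
      (by nlinarith : (0 : ℝ) ≤ 2 - 2 * z + z * t),
    mul_nonneg (by linarith : (0 : ℝ) ≤ 1 - 2 * z) (sq_nonneg t),
    mul_nonneg (by linarith : (0 : ℝ) ≤ 1 - z) (sub_nonneg.2 htaylor)]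

theorem poissonian_giant_max_large_mean_general
    {Ω : Type*} [MeasureSpace Ω] [IsProbabilityMeasure (ℙ : Measure Ω)]
    (X : Ω → ℝ) (hXpos : ∀ ω, 0 ≤ X ω)
    (hXint : Integrable X)
    (μc : ℝ) (hμc_root : 2 * μc = Real.exp (μc - 1 / 2))
    (hμc_max : ∀ x : ℝ, 2 * x = Real.exp (x - 1 / 2) → x ≤ μc)
    (μ : ℝ) (hμ : μ = ∫ ω, X ω) (hμge : μc ≤ μ)
    (f fbar : ℝ → ℝ)
    (hf : ∀ s, f s = ∫ ω, Real.exp (-(X ω) * (1 - s)))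
    (hfbar : ∀ s, fbar s = (∫ ω, X ω * Real.exp (-(X ω) * (1 - s))) / μ)
    (zD : ℝ) (hzD : zD ∈ Set.Icc (0 : ℝ) 1) (hzfix : zD = fbar zD)
    (zμ : ℝ)
    (hzμfix : zμ = Real.exp (-μ * (1 - zμ)))
    (hzμmin : ∀ s ∈ Set.Icc (0 : ℝ) 1, s = Real.exp (-μ * (1 - s)) → zμ ≤ s) :
    f zD ≥ Real.exp (-μ * (1 - zμ)) := by
  obtain ⟨x, hx1, hx⟩ := exists_one_le_two_mul_eq_exp_sub_half
  have hμc1 : 1 ≤ μc := hx1.trans (hμc_max x hx)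
  have hμz : 2 * μ * zμ ≤ 1 := two_mul_mul_le_one_of_two_mul_le_exp (by linarith)
    (two_mul_le_exp_sub_half hμc_root hμc1 hμge) hzμmin
  have hc : 0 ≤ 1 - zD := sub_nonneg.2 hzD.2
  have hfix : ∫ ω, X ω * exp (-X ω * (1 - zD)) = zD * ∫ ω, X ω := by
    rw [← hμ, (eq_div_iff (by linarith)).1 (hzfix.trans (hfbar zD))]
  rw [ge_iff_le, ← hzμfix, hf]
  rcases le_or_gt zμ zD with hle | hlt
  · calc zμ = exp (-μ * (1 - zμ)) := hzμfix
      _ ≤ exp (-(∫ ω, X ω) * (1 - zD)) := by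
          rw [← hμ]
          exact exp_le_exp.2 (by nlinarith)
      _ ≤ ∫ ω, exp (-X ω * (1 - zD)) := exp_neg_integral_mul_le_integral_exp_neg_mul hXpos hXint hc
  · have hzD_pos : 0 < zD := pos_of_mul_pos_left
      ((integral_mul_exp_neg_mul_pos hXpos hXint hc (by linarith)).trans_eq hfix) (by linarith)
    have hL : 0 < -log zD := neg_pos.2 (log_neg hzD_pos (by nlinarith))
    have hbound := one_sub_mul_integral_le_integral_exp_neg_mul hXpos hXint hc hL.ne'
      (by rw [neg_neg, exp_log hzD_pos, hfix])
    rw [neg_neg, exp_log hzD_pos, ← hμ] at hbound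
    have harith := mul_one_sub_sq_le_mul_neg_log hzD_pos hlt.le hμz (by nlinarith) hzμfix
    refine le_trans ?_ hbound
    rw [le_sub_comm, div_mul_eq_mul_div, div_le_iff₀ hL]
    nlinarith

theorem poissonian_giant_max_large_mean
    {Ω : Type*} [MeasureSpace Ω] [IsProbabilityMeasure (ℙ : Measure Ω)]
    (X : Ω → ℝ) (hXmeas : Measurable X) (hXpos : ∀ ω, 0 ≤ X ω)
    (hXint : Integrable X)
    (μc : ℝ) (hμc_root : 2 * μc = Real.exp (μc - 1 / 2))
    (hμc_max : ∀ x : ℝ, 2 * x = Real.exp (x - 1 / 2) → x ≤ μc)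
    (μ : ℝ) (hμ : μ = ∫ ω, X ω) (hμge : μc ≤ μ)
    (f fbar : ℝ → ℝ)
    (hf : ∀ s, f s = ∫ ω, Real.exp (-(X ω) * (1 - s)))
    (hfbar : ∀ s, fbar s = (∫ ω, X ω * Real.exp (-(X ω) * (1 - s))) / μ)
    (zD : ℝ) (hzD : zD ∈ Set.Icc (0 : ℝ) 1) (hzfix : zD = fbar zD)
    (hzmin : ∀ s ∈ Set.Icc (0 : ℝ) 1, s = fbar s → zD ≤ s)
    (zμ : ℝ) (hzμ : zμ ∈ Set.Icc (0 : ℝ) 1)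
    (hzμfix : zμ = Real.exp (-μ * (1 - zμ)))
    (hzμmin : ∀ s ∈ Set.Icc (0 : ℝ) 1, s = Real.exp (-μ * (1 - s)) → zμ ≤ s) :
    f zD ≥ Real.exp (-μ * (1 - zμ)) :=
  poissonian_giant_max_large_mean_general X hXpos hXint μc hμc_root hμc_max μ hμ hμge f fbar hf
    hfbar zD hzD hzfix zμ hzμfix hzμmin
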